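/- Let α > 0 and let p : ℝ → ℝ be odd and measurable, and assume there are constants 0 < c₀ ≤ C₀ such that for all ξ₁, ξ₂ ∈ ℝ with max(|ξ₁|, |ξ₂|, |ξ₁+ξ₂|) ≥ 1 one has c₀ |ξ|_min |ξ|_max^α ≤ |Ω(ξ₁,ξ₂)| ≤ C₀ |ξ|_min |ξ|_max^α. Then there exists K ≥ 1, depending only on c₀ and C₀, with the following property: for all dyadic numbers L₁, L₂, L₃ > 0 and dyadic numbers 0 < N₁ ≤ N₂ ≤ N₃ with N₃ ≥ 4, every bounded measurable χ : ℝ² → ℂ, and all u, v, w ∈ L²(ℝ²), if either L_max > K·max(N₁N₂^α, L_med) or L_max < K^{-1}·max(N₁N₂^α, L_med), then ∫_{ℝ²} Π_χ(Q_{L₁}P_{N₁}u, Q_{L₂}P_{N₂}v)(t,x) · (Q_{L₃}P_{N₃}w)(t,x) dx dt = 0, where L_max ≥ L_med ≥ L_min is the nonincreasing rearrangement of (L₁, L₂, L₃). -/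

import Mathlib

noncomputable section
open Real MeasureTheory
open scoped ENNReal

/-- The resonance function associated with a symbol `p`. -/
def Omega (p : ℝ → ℝ) (ξ₁ ξ₂ : ℝ) : ℝ := p (ξ₁ + ξ₂) - p ξ₁ - p ξ₂

/-- `|ξ|_min`: the minimum of `|ξ₁|, |ξ₂|, |ξ₁+ξ₂|`. -/
def ximin (ξ₁ ξ₂ : ℝ) : ℝ := min (min |ξ₁| |ξ₂|) |ξ₁ + ξ₂|

/-- `|ξ|_max`: the maximum of `|ξ₁|, |ξ₂|, |ξ₁+ξ₂|`. -/
def ximax (ξ₁ ξ₂ : ℝ) : ℝ := max (max |ξ₁| |ξ₂|) |ξ₁ + ξ₂|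

/-- A dyadic number `2^k`, `k ∈ ℤ`. -/
def IsDyadic (x : ℝ) : Prop := ∃ k : ℤ, x = 2 ^ k

/-- Space–time Fourier transform. -/
def ft2 (u : ℝ → ℝ → ℂ) (τ ξ : ℝ) : ℂ :=
  ∫ t : ℝ, ∫ x : ℝ, Complex.exp (-(Complex.I * ((t:ℂ) * (τ:ℂ) + (x:ℂ) * (ξ:ℂ)))) * u t x

/-- `φ(ξ) = η(ξ) - η(2ξ)`. -/
def phiCut (η : ℝ → ℝ) (ξ : ℝ) : ℝ := η ξ - η (2 * ξ)

/-- The space–time Fourier transform of `Q_L P_N u` : the symbol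
`φ((τ-p(ξ))/L) φ(ξ/N)` times `û`. -/
def qpSymb (η p : ℝ → ℝ) (L N : ℝ) (u : ℝ → ℝ → ℂ) (τ ξ : ℝ) : ℂ :=
  ((phiCut η ((τ - p ξ) / L) * phiCut η (ξ / N) : ℝ) : ℂ) * ft2 u τ ξ

/-- max of the three modulations -/
def Lmax (L₁ L₂ L₃ : ℝ) : ℝ := max L₁ (max L₂ L₃)
/-- min of the three modulations -/
def Lmin (L₁ L₂ L₃ : ℝ) : ℝ := min L₁ (min L₂ L₃)
/-- median of the three modulations -/
def Lmed (L₁ L₂ L₃ : ℝ) : ℝ := L₁ + L₂ + L₃ - Lmax L₁ L₂ L₃ - Lmin L₁ L₂ L₃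

/-- The space–time integral `∫∫ Π_χ(Q_{L₁}P_{N₁}u, Q_{L₂}P_{N₂}v) · Q_{L₃}P_{N₃}w dx dt`,
written (via Plancherel) as the Fourier-side convolution integral. -/
def triInt (η p : ℝ → ℝ) (χ : ℝ → ℝ → ℂ) (L₁ L₂ L₃ N₁ N₂ N₃ : ℝ)
    (u v w : ℝ → ℝ → ℂ) : ℂ :=
  ∫ τ : ℝ, ∫ ξ : ℝ,
    (∫ τ₁ : ℝ, ∫ ξ₁ : ℝ,
        qpSymb η p L₁ N₁ u τ₁ ξ₁ * qpSymb η p L₂ N₂ v (τ - τ₁) (ξ - ξ₁) * χ ξ ξ₁)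
      * qpSymb η p L₃ N₃ w (-τ) (-ξ)

lemma isDyadic_pos {x : ℝ} (h : IsDyadic x) : 0 < x := by
  obtain ⟨k, rfl⟩ := h; exact zpow_pos (by norm_num) k

lemma phiCut_bounds {η : ℝ → ℝ}
    (hη_one : ∀ x ∈ Set.Icc (-1:ℝ) 1, η x = 1)
    (hη_supp : ∀ x : ℝ, x ∉ Set.Icc (-2:ℝ) 2 → η x = 0)
    {x : ℝ} (h : phiCut η x ≠ 0) : 1/2 < |x| ∧ |x| ≤ 2 := by
  constructor
  · by_contra hc
    push_neg at hc
    have hx1 : x ∈ Set.Icc (-1:ℝ) 1 := by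
      rcases abs_le.mp (show |x| ≤ 1 by linarith) with ⟨a, b⟩
      exact ⟨by linarith, by linarith⟩
    have hx2 : 2*x ∈ Set.Icc (-1:ℝ) 1 := by
      rcases abs_le.mp (show |x| ≤ 1/2 from hc) with ⟨a, b⟩
      exact ⟨by linarith, by linarith⟩
    exact h (by simp [phiCut, hη_one x hx1, hη_one (2*x) hx2])
  · by_contra hc
    push_neg at hc
    have hx1 : x ∉ Set.Icc (-2:ℝ) 2 := fun hx =>
      absurd (abs_le.mpr ⟨hx.1, hx.2⟩) (not_le.mpr hc)
    have hx2 : 2*x ∉ Set.Icc (-2:ℝ) 2 := by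
      intro hx
      have h2 : |2*x| ≤ 2 := abs_le.mpr ⟨hx.1, hx.2⟩
      rw [abs_mul] at h2
      have he : |(2:ℝ)| = 2 := by norm_num
      rw [he] at h2
      linarith
    exact h (by simp [phiCut, hη_supp x hx1, hη_supp (2*x) hx2])

lemma phiCut_scaled {η : ℝ → ℝ}
    (hη_one : ∀ x ∈ Set.Icc (-1:ℝ) 1, η x = 1)
    (hη_supp : ∀ x : ℝ, x ∉ Set.Icc (-2:ℝ) 2 → η x = 0)
    {L σ : ℝ} (hL : 0 < L) (h : phiCut η (σ/L) ≠ 0) : L/2 ≤ |σ| ∧ |σ| ≤ 2*L := by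
  obtain ⟨h1, h2⟩ := phiCut_bounds hη_one hη_supp h
  rw [abs_div, abs_of_pos hL] at h1 h2
  have a1 := (lt_div_iff₀ hL).mp h1
  have a2 := (div_le_iff₀ hL).mp h2
  constructor <;> linarith

lemma sigma_low (L₁ L₂ L₃ σ₁ σ₂ σ₃ : ℝ)
    (h1 : L₁/2 ≤ |σ₁|) (h1' : |σ₁| ≤ 2*L₁)
    (h2 : L₂/2 ≤ |σ₂|) (h2' : |σ₂| ≤ 2*L₂)
    (h3 : L₃/2 ≤ |σ₃|) (h3' : |σ₃| ≤ 2*L₃) :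
    Lmax L₁ L₂ L₃ / 2 - 4 * Lmed L₁ L₂ L₃ ≤ |σ₁ + σ₂ + σ₃| := by
  have t1 : |σ₁| - |σ₂| - |σ₃| ≤ |σ₁+σ₂+σ₃| := by
    have ha := abs_add_le (σ₁+σ₂+σ₃) (-σ₂ + -σ₃)
    have hb := abs_add_le (-σ₂) (-σ₃)
    simp only [abs_neg] at ha hb
    have e : σ₁ + σ₂ + σ₃ + (-σ₂ + -σ₃) = σ₁ := by ring
    rw [e] at ha
    linarith
  have t2 : |σ₂| - |σ₁| - |σ₃| ≤ |σ₁+σ₂+σ₃| := by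
    have ha := abs_add_le (σ₁+σ₂+σ₃) (-σ₁ + -σ₃)
    have hb := abs_add_le (-σ₁) (-σ₃)
    simp only [abs_neg] at ha hb
    have e : σ₁ + σ₂ + σ₃ + (-σ₁ + -σ₃) = σ₂ := by ring
    rw [e] at ha
    linarith
  have t3 : |σ₃| - |σ₁| - |σ₂| ≤ |σ₁+σ₂+σ₃| := by
    have ha := abs_add_le (σ₁+σ₂+σ₃) (-σ₁ + -σ₂)
    have hb := abs_add_le (-σ₁) (-σ₂)
    simp only [abs_neg] at ha hb
    have e : σ₁ + σ₂ + σ₃ + (-σ₁ + -σ₂) = σ₃ := by ring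
    rw [e] at ha
    linarith
  unfold Lmed Lmax Lmin
  rcases le_total L₁ L₂ with a|a <;> rcases le_total L₂ L₃ with b|b <;>
    rcases le_total L₁ L₃ with c|c <;>
    simp only [max_def, min_def] <;> split_ifs <;> linarith

lemma sigma_high (L₁ L₂ L₃ σ₁ σ₂ σ₃ : ℝ)
    (h1' : |σ₁| ≤ 2*L₁) (h2' : |σ₂| ≤ 2*L₂) (h3' : |σ₃| ≤ 2*L₃) :
    |σ₁ + σ₂ + σ₃| ≤ 6 * Lmax L₁ L₂ L₃ := by
  have ha := abs_add_le (σ₁ + σ₂) σ₃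
  have hb := abs_add_le σ₁ σ₂
  have e1 : L₁ ≤ Lmax L₁ L₂ L₃ := le_max_left _ _
  have e2 : L₂ ≤ Lmax L₁ L₂ L₃ := le_trans (le_max_left _ _) (le_max_right _ _)
  have e3 : L₃ ≤ Lmax L₁ L₂ L₃ := le_trans (le_max_right _ _) (le_max_right _ _)
  linarith

lemma lmed_le_lmax (L₁ L₂ L₃ : ℝ) : Lmed L₁ L₂ L₃ ≤ Lmax L₁ L₂ L₃ := by
  unfold Lmed Lmax Lmin
  rcases le_total L₁ L₂ with a|a <;> rcases le_total L₂ L₃ with b|b <;>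
    rcases le_total L₁ L₃ with c|c <;>
    simp only [max_def, min_def] <;> split_ifs <;> linarith

lemma lmin_le_lmed (L₁ L₂ L₃ : ℝ) : Lmin L₁ L₂ L₃ ≤ Lmed L₁ L₂ L₃ := by
  unfold Lmed Lmax Lmin
  rcases le_total L₁ L₂ with a|a <;> rcases le_total L₂ L₃ with b|b <;>
    rcases le_total L₁ L₃ with c|c <;>
    simp only [max_def, min_def] <;> split_ifs <;> linarith

/-- The analytic core: on the support of all six cutoffs, the separation
hypothesis is contradictory. -/
lemma core_contra (α : ℝ) (hα : 0 < α)
    (p : ℝ → ℝ) (hodd : ∀ ξ : ℝ, p (-ξ) = -p ξ)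
    (c₀ C₀ : ℝ) (hc₀ : 0 < c₀) (hc₀C₀ : c₀ ≤ C₀)
    (hres : ∀ ξ₁ ξ₂ : ℝ, 1 ≤ ximax ξ₁ ξ₂ →
      c₀ * ximin ξ₁ ξ₂ * ximax ξ₁ ξ₂ ^ α ≤ |Omega p ξ₁ ξ₂| ∧
      |Omega p ξ₁ ξ₂| ≤ C₀ * ximin ξ₁ ξ₂ * ximax ξ₁ ξ₂ ^ α)
    (η : ℝ → ℝ)
    (hη_one : ∀ x ∈ Set.Icc (-1:ℝ) 1, η x = 1)
    (hη_supp : ∀ x : ℝ, x ∉ Set.Icc (-2:ℝ) 2 → η x = 0)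
    (L₁ L₂ L₃ N₁ N₂ N₃ : ℝ)
    (pL₁ : 0 < L₁) (pL₂ : 0 < L₂) (pL₃ : 0 < L₃)
    (pN₁ : 0 < N₁) (pN₂ : 0 < N₂) (pN₃ : 0 < N₃)
    (h12 : N₁ ≤ N₂) (h23 : N₂ ≤ N₃) (h4 : 4 ≤ N₃)
    (hsep : ((16 + 8*(4:ℝ)^α*C₀ + 12*(2:ℝ)^α/c₀) * max (N₁ * N₂ ^ α) (Lmed L₁ L₂ L₃)
        < Lmax L₁ L₂ L₃ ∨
      (16 + 8*(4:ℝ)^α*C₀ + 12*(2:ℝ)^α/c₀) * Lmax L₁ L₂ L₃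
        < max (N₁ * N₂ ^ α) (Lmed L₁ L₂ L₃)))
    (τ ξ τ₁ ξ₁ : ℝ)
    (f1 : phiCut η ((τ₁ - p ξ₁) / L₁) ≠ 0)
    (f2 : phiCut η (ξ₁ / N₁) ≠ 0)
    (f3 : phiCut η ((τ - τ₁ - p (ξ - ξ₁)) / L₂) ≠ 0)
    (f4 : phiCut η ((ξ - ξ₁) / N₂) ≠ 0)
    (f5 : phiCut η ((-τ - p (-ξ)) / L₃) ≠ 0)
    (f6 : phiCut η ((-ξ) / N₃) ≠ 0) : False := by
  set K : ℝ := 16 + 8*(4:ℝ)^α*C₀ + 12*(2:ℝ)^α/c₀ with hKdef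
  clear_value K
  have hC₀ : 0 < C₀ := lt_of_lt_of_le hc₀ hc₀C₀
  have hD : (0:ℝ) < (2:ℝ)^α := rpow_pos_of_pos (by norm_num) α
  have hE : (0:ℝ) < (4:ℝ)^α := rpow_pos_of_pos (by norm_num) α
  have hK16 : (16:ℝ) ≤ K := by
    have e1 : (0:ℝ) ≤ 8*(4:ℝ)^α*C₀ := by positivity
    have e2 : (0:ℝ) ≤ 12*(2:ℝ)^α/c₀ := by positivity
    rw [hKdef]; linarith
  -- modulation bounds
  obtain ⟨a1, a1'⟩ := phiCut_scaled hη_one hη_supp pL₁ f1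
  obtain ⟨a2, a2'⟩ := phiCut_scaled hη_one hη_supp pL₂ f3
  obtain ⟨a3, a3'⟩ := phiCut_scaled hη_one hη_supp pL₃ f5
  -- frequency bounds
  obtain ⟨b1, b1'⟩ := phiCut_scaled hη_one hη_supp pN₁ f2
  obtain ⟨b2, b2'⟩ := phiCut_scaled hη_one hη_supp pN₂ f4
  obtain ⟨b3, b3'⟩ := phiCut_scaled hη_one hη_supp pN₃ f6
  rw [abs_neg] at b3 b3'
  have hξeq : ξ₁ + (ξ - ξ₁) = ξ := by ring
  have hxm_def : ximin ξ₁ (ξ - ξ₁) = min (min |ξ₁| |ξ - ξ₁|) |ξ| := by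
    rw [ximin, hξeq]
  have hxM_def : ximax ξ₁ (ξ - ξ₁) = max (max |ξ₁| |ξ - ξ₁|) |ξ| := by
    rw [ximax, hξeq]
  have hxM1 : 1 ≤ ximax ξ₁ (ξ - ξ₁) := by
    rw [hxM_def]
    exact le_trans (by linarith) (le_max_right _ _)
  obtain ⟨hlow, hhigh⟩ := hres ξ₁ (ξ - ξ₁) hxM1
  have hxm_ge : N₁/2 ≤ ximin ξ₁ (ξ - ξ₁) := by
    rw [hxm_def]
    exact le_min (le_min (by linarith) (by linarith)) (by linarith)
  have hxm_le : ximin ξ₁ (ξ - ξ₁) ≤ 2*N₁ := by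
    rw [hxm_def]
    exact le_trans (min_le_left _ _) (le_trans (min_le_left _ _) b1')
  have hxM_ge : N₂/2 ≤ ximax ξ₁ (ξ - ξ₁) := by
    rw [hxM_def]
    exact le_trans (by linarith) (le_max_right _ _)
  have hxM_le : ximax ξ₁ (ξ - ξ₁) ≤ 4*N₂ := by
    have habs := abs_add_le ξ₁ (ξ - ξ₁)
    rw [hξeq] at habs
    rw [hxM_def]
    exact max_le (max_le (by linarith) (by linarith)) (by linarith)
  have hxm_pos : 0 < ximin ξ₁ (ξ - ξ₁) := lt_of_lt_of_le (by linarith) hxm_ge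
  have hxM_nn : (0:ℝ) ≤ ximax ξ₁ (ξ - ξ₁) := le_trans zero_le_one hxM1
  -- rpow bounds
  have hN₂α : (0:ℝ) < N₂^α := rpow_pos_of_pos pN₂ α
  have hxMα_ge : (N₂/2)^α ≤ ximax ξ₁ (ξ - ξ₁) ^ α :=
    rpow_le_rpow (by positivity) hxM_ge hα.le
  have hxMα_le : ximax ξ₁ (ξ - ξ₁) ^ α ≤ (4*N₂)^α :=
    rpow_le_rpow hxM_nn hxM_le hα.le
  have e1 : (N₂/2)^α = N₂^α / (2:ℝ)^α := Real.div_rpow pN₂.le (by norm_num) α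
  have e2 : ((4:ℝ)*N₂)^α = (4:ℝ)^α * N₂^α := Real.mul_rpow (by norm_num) pN₂.le
  set M : ℝ := N₁ * N₂^α with hMdef
  have hM : 0 < M := by rw [hMdef]; positivity
  -- resonance lower bound
  have hΩlow : c₀ * M / (2*(2:ℝ)^α) ≤ |Omega p ξ₁ (ξ - ξ₁)| := by
    have m1 : c₀ * (N₁/2) ≤ c₀ * ximin ξ₁ (ξ - ξ₁) :=
      mul_le_mul_of_nonneg_left hxm_ge hc₀.le
    have m2 : c₀ * (N₁/2) * ((N₂/2)^α) ≤
        c₀ * ximin ξ₁ (ξ - ξ₁) * ximax ξ₁ (ξ - ξ₁) ^ α :=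
      mul_le_mul m1 hxMα_ge (by positivity) (mul_nonneg hc₀.le hxm_pos.le)
    have heq2 : c₀ * (N₁/2) * ((N₂/2)^α) = c₀ * M / (2*(2:ℝ)^α) := by
      rw [e1, hMdef]; field_simp
    linarith
  -- resonance upper bound
  have hΩhigh : |Omega p ξ₁ (ξ - ξ₁)| ≤ 2*(4:ℝ)^α*C₀*M := by
    have m1 : C₀ * ximin ξ₁ (ξ - ξ₁) ≤ C₀ * (2*N₁) :=
      mul_le_mul_of_nonneg_left hxm_le hC₀.le
    have m2 : C₀ * ximin ξ₁ (ξ - ξ₁) * ximax ξ₁ (ξ - ξ₁) ^ α ≤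
        C₀ * (2*N₁) * ((4*N₂)^α) :=
      mul_le_mul m1 hxMα_le (by positivity) (by positivity)
    have heq2 : C₀ * (2*N₁) * (((4:ℝ)*N₂)^α) = 2*(4:ℝ)^α*C₀*M := by
      rw [e2, hMdef]; ring
    linarith
  -- modulation vs resonance
  have habseq : (τ₁ - p ξ₁) + ((τ - τ₁) - p (ξ - ξ₁)) + (-τ - p (-ξ))
      = Omega p ξ₁ (ξ - ξ₁) := by
    simp only [Omega, hξeq, hodd]; ring
  have hsl := sigma_low L₁ L₂ L₃ _ _ _ a1 a1' a2 a2' a3 a3'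
  have hsh := sigma_high L₁ L₂ L₃ _ _ _ a1' a2' a3'
  rw [habseq] at hsl hsh
  have hLmin_pos : 0 < Lmin L₁ L₂ L₃ := lt_min pL₁ (lt_min pL₂ pL₃)
  have hLmed_nn : 0 ≤ Lmed L₁ L₂ L₃ :=
    le_trans hLmin_pos.le (lmin_le_lmed L₁ L₂ L₃)
  have hLmax_pos : 0 < Lmax L₁ L₂ L₃ := lt_of_lt_of_le pL₁ (le_max_left _ _)
  have hKpos : (0:ℝ) < K := by linarith
  rcases hsep with h | h
  · have c1 : K * Lmed L₁ L₂ L₃ ≤ K * max M (Lmed L₁ L₂ L₃) :=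
      mul_le_mul_of_nonneg_left (le_max_right _ _) hKpos.le
    have c2 : K * M ≤ K * max M (Lmed L₁ L₂ L₃) :=
      mul_le_mul_of_nonneg_left (le_max_left _ _) hKpos.le
    have c3 : 16 * Lmed L₁ L₂ L₃ ≤ K * Lmed L₁ L₂ L₃ :=
      mul_le_mul_of_nonneg_right hK16 hLmed_nn
    have c4 : (8*(4:ℝ)^α*C₀) * M ≤ K * M := by
      apply mul_le_mul_of_nonneg_right _ hM.le
      rw [hKdef]
      have : (0:ℝ) ≤ 12*(2:ℝ)^α/c₀ := by positivity
      linarith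
    linarith
  · have hml : Lmed L₁ L₂ L₃ ≤ Lmax L₁ L₂ L₃ := lmed_le_lmax _ _ _
    have h1 : 1 * Lmax L₁ L₂ L₃ ≤ K * Lmax L₁ L₂ L₃ :=
      mul_le_mul_of_nonneg_right (by linarith) hLmax_pos.le
    have hmax : max M (Lmed L₁ L₂ L₃) = M := by
      rcases max_cases M (Lmed L₁ L₂ L₃) with ⟨e, _⟩ | ⟨e, _⟩
      · exact e
      · exfalso; rw [e] at h; linarith
    rw [hmax] at h
    have p1 : K * |Omega p ξ₁ (ξ - ξ₁)| ≤ K * (6 * Lmax L₁ L₂ L₃) :=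
      mul_le_mul_of_nonneg_left hsh hKpos.le
    have p4 : (12*(2:ℝ)^α/c₀) * (c₀*M/(2*(2:ℝ)^α)) ≤ K * (c₀*M/(2*(2:ℝ)^α)) := by
      apply mul_le_mul_of_nonneg_right _ (by positivity)
      rw [hKdef]
      have : (0:ℝ) ≤ 8*(4:ℝ)^α*C₀ := by positivity
      linarith
    have p5 : (12*(2:ℝ)^α/c₀) * (c₀*M/(2*(2:ℝ)^α)) = 6*M := by
      field_simp; ring
    have p6 : K * (c₀*M/(2*(2:ℝ)^α)) ≤ K * |Omega p ξ₁ (ξ - ξ₁)| :=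
      mul_le_mul_of_nonneg_left hΩlow hKpos.le
    linarith

theorem stmt7 (α : ℝ) (hα : 0 < α)
    (p : ℝ → ℝ) (hp : Measurable p) (hodd : ∀ ξ : ℝ, p (-ξ) = -p ξ)
    (c₀ C₀ : ℝ) (hc₀ : 0 < c₀) (hc₀C₀ : c₀ ≤ C₀)
    (hres : ∀ ξ₁ ξ₂ : ℝ, 1 ≤ ximax ξ₁ ξ₂ →
      c₀ * ximin ξ₁ ξ₂ * ximax ξ₁ ξ₂ ^ α ≤ |Omega p ξ₁ ξ₂| ∧
      |Omega p ξ₁ ξ₂| ≤ C₀ * ximin ξ₁ ξ₂ * ximax ξ₁ ξ₂ ^ α)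
    (η : ℝ → ℝ) (hη_smooth : ContDiff ℝ (⊤ : ℕ∞) η)
    (hη_range : ∀ x : ℝ, 0 ≤ η x ∧ η x ≤ 1)
    (hη_one : ∀ x ∈ Set.Icc (-1:ℝ) 1, η x = 1)
    (hη_supp : ∀ x : ℝ, x ∉ Set.Icc (-2:ℝ) 2 → η x = 0) :
    ∃ K : ℝ, 1 ≤ K ∧
      ∀ L₁ L₂ L₃ N₁ N₂ N₃ : ℝ,
        IsDyadic L₁ → IsDyadic L₂ → IsDyadic L₃ →
        IsDyadic N₁ → IsDyadic N₂ → IsDyadic N₃ →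
        N₁ ≤ N₂ → N₂ ≤ N₃ → 4 ≤ N₃ →
        ∀ χ : ℝ → ℝ → ℂ, Measurable (fun q : ℝ × ℝ => χ q.1 q.2) →
          (∃ B : ℝ, ∀ ξ ξ₁ : ℝ, ‖χ ξ ξ₁‖ ≤ B) →
        ∀ u v w : ℝ → ℝ → ℂ,
          MemLp (fun q : ℝ × ℝ => u q.1 q.2) 2 volume →
          MemLp (fun q : ℝ × ℝ => v q.1 q.2) 2 volume →
          MemLp (fun q : ℝ × ℝ => w q.1 q.2) 2 volume →
          (K * max (N₁ * N₂ ^ α) (Lmed L₁ L₂ L₃) < Lmax L₁ L₂ L₃ ∨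
            K * Lmax L₁ L₂ L₃ < max (N₁ * N₂ ^ α) (Lmed L₁ L₂ L₃)) →
          triInt η p χ L₁ L₂ L₃ N₁ N₂ N₃ u v w = 0 := by
  refine ⟨16 + 8*(4:ℝ)^α*C₀ + 12*(2:ℝ)^α/c₀, ?_, ?_⟩
  · have hC₀ : 0 < C₀ := lt_of_lt_of_le hc₀ hc₀C₀
    have e1 : (0:ℝ) ≤ 8*(4:ℝ)^α*C₀ := by positivity
    have e2 : (0:ℝ) ≤ 12*(2:ℝ)^α/c₀ := by positivity
    linarith
  intro L₁ L₂ L₃ N₁ N₂ N₃ hL₁ hL₂ hL₃ hN₁ hN₂ hN₃ h12 h23 h4 χ hχm hχb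
    u v w hu hv hw hsep
  have key : ∀ τ ξ τ₁ ξ₁ : ℝ,
      qpSymb η p L₁ N₁ u τ₁ ξ₁ * qpSymb η p L₂ N₂ v (τ - τ₁) (ξ - ξ₁)
        * qpSymb η p L₃ N₃ w (-τ) (-ξ) = 0 := by
    intro τ ξ τ₁ ξ₁
    by_contra hne
    have f1 : phiCut η ((τ₁ - p ξ₁) / L₁) ≠ 0 := fun h => hne (by simp [qpSymb, h])
    have f2 : phiCut η (ξ₁ / N₁) ≠ 0 := fun h => hne (by simp [qpSymb, h])
    have f3 : phiCut η ((τ - τ₁ - p (ξ - ξ₁)) / L₂) ≠ 0 := fun h =>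
      hne (by simp [qpSymb, h])
    have f4 : phiCut η ((ξ - ξ₁) / N₂) ≠ 0 := fun h => hne (by simp [qpSymb, h])
    have f5 : phiCut η ((-τ - p (-ξ)) / L₃) ≠ 0 := fun h => hne (by simp [qpSymb, h])
    have f6 : phiCut η ((-ξ) / N₃) ≠ 0 := fun h => hne (by simp [qpSymb, h])
    exact core_contra α hα p hodd c₀ C₀ hc₀ hc₀C₀ hres η hη_one hη_supp
      L₁ L₂ L₃ N₁ N₂ N₃ (isDyadic_pos hL₁) (isDyadic_pos hL₂) (isDyadic_pos hL₃)
      (isDyadic_pos hN₁) (isDyadic_pos hN₂) (isDyadic_pos hN₃)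
      h12 h23 h4 hsep τ ξ τ₁ ξ₁ f1 f2 f3 f4 f5 f6
  unfold triInt
  have h2 : ∀ τ ξ : ℝ,
      (∫ τ₁ : ℝ, ∫ ξ₁ : ℝ,
          qpSymb η p L₁ N₁ u τ₁ ξ₁ * qpSymb η p L₂ N₂ v (τ - τ₁) (ξ - ξ₁) * χ ξ ξ₁)
        * qpSymb η p L₃ N₃ w (-τ) (-ξ) = 0 := by
    intro τ ξ
    by_cases h3 : qpSymb η p L₃ N₃ w (-τ) (-ξ) = 0
    · rw [h3, mul_zero]
    · have hz : ∀ τ₁ ξ₁ : ℝ,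
          qpSymb η p L₁ N₁ u τ₁ ξ₁ * qpSymb η p L₂ N₂ v (τ - τ₁) (ξ - ξ₁) * χ ξ ξ₁
            = 0 := by
        intro τ₁ ξ₁
        rcases mul_eq_zero.mp (key τ ξ τ₁ ξ₁) with h | h
        · rw [h, zero_mul]
        · exact absurd h h3
      simp only [hz, integral_zero, zero_mul]
  simp only [h2, integral_zero]
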